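/- arXiv:2105.12353 — 2 statements merged into one kernel-verified Lean document; each statement's English description precedes it below -/
import Mathlib

section
/- Assume τ * |𝒜| ≤ K and that for every attribute b : 𝒜 at least τ items i ∉ H satisfy a i = b. For 0 ≤ j ≤ n let R_j denote the list built by the greedy fold after processing the first j entries of ord. Then for every attribute b : 𝒜 and every j, count b R_j + |{ i ∉ H : a i = b and i occurs in ord at a position ≥ j }| ≥ τ. (This is the induction invariant in the proof of Theorem 4.1.) -/
/-!
The greedy fold keeps the invariant that the total deficit `∑_b max 0 (τ - count b R)` fits
in the `K - |R|` free slots: it holds initially because `τ |𝒜| ≤ K`, and `CanAdd` is exactly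
its preservation. Hence an item `i ∉ H` can be rejected only when its attribute already meets
the quota, since otherwise appending `i` lowers the deficit and the free space by one each.
So an item of attribute `b` that leaves the pool of remaining candidates either enters the list
or is rejected when `b` already has `τ` entries, which keeps `count b R_j + remaining_j ≥ τ`.
-/

open Finset

/-- Number of entries of list `R` whose attribute is `b`. -/
def countAttr {n : ℕ} {𝒜 : Type*} [DecidableEq 𝒜] (a : Fin n → 𝒜) (b : 𝒜)
    (R : List (Fin n)) : ℕ :=
  R.countP (fun i => a i = b)

/-- `CanAdd R i` holds iff adding item `i` to the current list `R` keeps the minimum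
requirement `τ` satisfiable within `K` slots. -/
def CanAdd {n : ℕ} {𝒜 : Type*} [Fintype 𝒜] [DecidableEq 𝒜] (K τ : ℕ)
    (a : Fin n → 𝒜) (R : List (Fin n)) (i : Fin n) : Prop :=
  ∑ b : 𝒜, max 0 ((τ : ℤ) - countAttr a b (R ++ [i])) ≤ (K : ℤ) - (R.length + 1)

instance {n : ℕ} {𝒜 : Type*} [Fintype 𝒜] [DecidableEq 𝒜] (K τ : ℕ)
    (a : Fin n → 𝒜) (R : List (Fin n)) (i : Fin n) :
    Decidable (CanAdd K τ a R i) := by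
  unfold CanAdd; infer_instance

/-- The PrivateRank greedy fold: process items in the order `ord`, appending an item when it is
not in `H` and `CanAdd` holds. -/
def privateRank {n : ℕ} {𝒜 : Type*} [Fintype 𝒜] [DecidableEq 𝒜] (K τ : ℕ)
    (a : Fin n → 𝒜) (H : Finset (Fin n)) (ord : List (Fin n)) : List (Fin n) :=
  ord.foldl (fun R i => if i ∉ H ∧ CanAdd K τ a R i then R ++ [i] else R) []

lemma List.Nodup.countP_eq_card_filter_and_mem {α : Type*} [Fintype α] [DecidableEq α]
    {l : List α} (hl : l.Nodup) (p : α → Prop) [DecidablePred p] :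
    l.countP (fun i => p i) = (univ.filter (fun i => p i ∧ i ∈ l)).card := by
  rw [List.countP_eq_length_filter, ← List.toFinset_card_of_nodup (hl.filter _),
    List.toFinset_filter]
  congr 1
  ext i
  simp [and_comm]

section PrivateRank

variable {n : ℕ} {𝒜 : Type*} [DecidableEq 𝒜] {K τ : ℕ} {a : Fin n → 𝒜} {H : Finset (Fin n)}

lemma countAttr_concat (b : 𝒜) (R : List (Fin n)) (i : Fin n) :
    countAttr a b (R ++ [i]) = countAttr a b R + if a i = b then 1 else 0 := by
  simp [countAttr, List.countP_append, List.countP_cons]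

variable [Fintype 𝒜]

def deficit (τ : ℕ) (a : Fin n → 𝒜) (R : List (Fin n)) : ℤ :=
  ∑ b : 𝒜, max 0 ((τ : ℤ) - countAttr a b R)

lemma canAdd_iff_deficit_le (R : List (Fin n)) (i : Fin n) :
    CanAdd K τ a R i ↔ deficit τ a (R ++ [i]) ≤ K - (R.length + 1) :=
  Iff.rfl

lemma deficit_concat_of_countAttr_lt {R : List (Fin n)} {i : Fin n}
    (hi : countAttr a (a i) R < τ) :
    deficit τ a (R ++ [i]) = deficit τ a R - 1 := by
  have hterm : ∀ b : 𝒜, max 0 ((τ : ℤ) - countAttr a b (R ++ [i])) =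
      max 0 ((τ : ℤ) - countAttr a b R) - if b = a i then 1 else 0 := by
    intro b
    rw [countAttr_concat]
    by_cases hb : b = a i
    · subst hb
      simp only [if_true]
      push_cast
      omega
    · simp [hb, Ne.symm hb]
  simp only [deficit, hterm, Finset.sum_sub_distrib, Finset.sum_ite_eq', Finset.mem_univ, if_true]

lemma privateRank_concat (l : List (Fin n)) (i : Fin n) :
    privateRank K τ a H (l ++ [i]) =
      if i ∉ H ∧ CanAdd K τ a (privateRank K τ a H l) i
      then privateRank K τ a H l ++ [i] else privateRank K τ a H l :=
  List.foldl_append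

lemma deficit_privateRank_le (hτK : τ * Fintype.card 𝒜 ≤ K) (l : List (Fin n)) :
    deficit τ a (privateRank K τ a H l) ≤ K - (privateRank K τ a H l).length := by
  induction l using List.reverseRecOn with
  | nil =>
    have hK : ((Fintype.card 𝒜 * τ : ℕ) : ℤ) ≤ K := by rw [mul_comm]; exact_mod_cast hτK
    simpa [deficit, privateRank, countAttr] using hK
  | append_singleton l i ih =>
    rw [privateRank_concat]
    split_ifs with hadd
    · simpa [canAdd_iff_deficit_le] using hadd.2
    · exact ih

lemma le_countAttr_of_not_canAdd {R : List (Fin n)} {i : Fin n}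
    (hR : deficit τ a R ≤ K - R.length) (hi : ¬ CanAdd K τ a R i) :
    τ ≤ countAttr a (a i) R := by
  by_contra! hlt
  apply hi
  rw [canAdd_iff_deficit_le, deficit_concat_of_countAttr_lt hlt]
  linarith

lemma le_countAttr_privateRank_add_countP (hτK : τ * Fintype.card 𝒜 ≤ K) (b : 𝒜)
    (pre suf : List (Fin n)) (h : τ ≤ (pre ++ suf).countP (fun i => i ∉ H ∧ a i = b)) :
    τ ≤ countAttr a b (privateRank K τ a H pre) + suf.countP (fun i => i ∉ H ∧ a i = b) := by
  induction pre using List.reverseRecOn generalizing suf with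
  | nil => simpa [privateRank, countAttr] using h
  | append_singleton pre x ih =>
    have hx := ih (x :: suf) (by simpa using h)
    simp only [List.countP_cons, decide_eq_true_eq] at hx
    rw [privateRank_concat]
    split_ifs with hadd
    · rw [countAttr_concat]
      by_cases hb : a x = b
      · simp only [hb, hadd.1, not_false_eq_true, and_self, if_true] at hx ⊢
        omega
      · simpa [hb] using hx
    · by_cases hq : x ∉ H ∧ a x = b
      · have hquota := le_countAttr_of_not_canAdd (deficit_privateRank_le hτK pre)
          (fun hcan => hadd ⟨hq.1, hcan⟩)
        rw [hq.2] at hquota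
        omega
      · simpa [hq] using hx

end PrivateRank

theorem privateRank_invariant_general
    (n K τ : ℕ) (𝒜 : Type*) [Fintype 𝒜] [DecidableEq 𝒜]
    (a : Fin n → 𝒜) (H : Finset (Fin n)) (ord : List (Fin n))
    (hord : ∀ i : Fin n, ord.count i = 1)
    (hτK : τ * Fintype.card 𝒜 ≤ K)
    (hattr : ∀ b : 𝒜, τ ≤ (univ.filter (fun i : Fin n => i ∉ H ∧ a i = b)).card) :
    ∀ (b : 𝒜) (j : ℕ), j ≤ n →
      τ ≤ countAttr a b (privateRank K τ a H (ord.take j)) +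
        (univ.filter (fun i : Fin n => i ∉ H ∧ a i = b ∧ i ∈ ord.drop j)).card := by
  intro b j _
  have hnodup : ord.Nodup := List.nodup_iff_count_le_one.mpr fun i => (hord i).le
  have hmem : ∀ i, i ∈ ord := fun i => List.count_pos_iff.mp (by rw [hord i]; norm_num)
  have hall : τ ≤ ord.countP (fun i => i ∉ H ∧ a i = b) := by
    simpa only [hnodup.countP_eq_card_filter_and_mem, hmem, and_true] using hattr b
  have hsplit := le_countAttr_privateRank_add_countP hτK b (ord.take j) (ord.drop j)
    (by rwa [List.take_append_drop])
  rw [(hnodup.sublist (List.drop_sublist j ord)).countP_eq_card_filter_and_mem] at hsplit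
  simpa only [and_assoc] using hsplit

/-- The induction invariant in the proof of Theorem 4.1: after processing the first `j` entries
of `ord`, for every attribute `b`, the items of attribute `b` already placed in the list, plus
the items of attribute `b` outside `H` still to be processed (occurring in `ord` at a position
`≥ j`), number at least `τ`. -/
theorem privateRank_invariant
    (n K τ : ℕ) (𝒜 : Type*) [Fintype 𝒜] [DecidableEq 𝒜] [Nonempty 𝒜]
    (a : Fin n → 𝒜) (H : Finset (Fin n)) (ord : List (Fin n))
    (hord : ∀ i : Fin n, ord.count i = 1)
    (hτK : τ * Fintype.card 𝒜 ≤ K)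
    (hattr : ∀ b : 𝒜, τ ≤ (univ.filter (fun i : Fin n => i ∉ H ∧ a i = b)).card) :
    ∀ (b : 𝒜) (j : ℕ), j ≤ n →
      τ ≤ countAttr a b (privateRank K τ a H (ord.take j)) +
        (univ.filter (fun i : Fin n => i ∉ H ∧ a i = b ∧ i ∈ ord.drop j)).card :=
  privateRank_invariant_general n K τ 𝒜 a H ord hord hτK hattr
end

section
/- Assume 0 ≤ c ≤ 1 and L ≥ 1. Then for every item i and every k : Fin K, the truncated personalized PageRank value of the rank-(k+1) recommended item satisfies Ŝ_i (P i k) ≥ (1−c) · c / (D · log(k+2)). -/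
open Finset Matrix

/-- The normalizing constant `D = ∑_{r=1}^{K} 1 / log (r+1)`. -/
noncomputable def Dconst (K : ℕ) : ℝ := ∑ r ∈ Finset.Icc 1 K, 1 / Real.log ((r : ℝ) + 1)

/-- The weighted adjacency matrix of the recommendation network: `A i j = 1 / log (k+2)` if
`P i k = j` for some (necessarily unique, by injectivity) rank `k : Fin K`, and `0` otherwise. -/
noncomputable def adj {n K : ℕ} (P : Fin n → Fin K → Fin n) :
    Matrix (Fin n) (Fin n) ℝ := fun i j =>
  ∑ k : Fin K, if P i k = j then 1 / Real.log (((k : ℕ) : ℝ) + 2) else 0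

/-- The row-normalized adjacency matrix `Ã = D⁻¹ • A`. -/
noncomputable def normAdj {n K : ℕ} (P : Fin n → Fin K → Fin n) :
    Matrix (Fin n) (Fin n) ℝ :=
  (Dconst K)⁻¹ • adj P

/-- The truncated personalized PageRank vector
`Ŝ_i = (1-c) • ((∑_{k=0}^{L} (c • Ãᵀ)^k) *ᵥ e_i)`. -/
noncomputable def pprTrunc {n K : ℕ} (P : Fin n → Fin K → Fin n) (c : ℝ) (L : ℕ)
    (i : Fin n) : Fin n → ℝ :=
  (1 - c) • ((∑ k ∈ Finset.range (L + 1), (c • (normAdj P)ᵀ) ^ k) *ᵥ Pi.single i 1)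

/-!
Only the path of length one from `i` to its recommended item `P i k` is needed: the term `m = 1`
of the truncated Neumann series contributes `c · Ã (i, P i k) ≥ c / (D · log (k+2))`, and every
other term is nonnegative because all entries of `c • Ãᵀ` are.
-/

lemma Matrix.apply_le_sum_range_pow_apply {ι α : Type*} [Fintype ι] [DecidableEq ι]
    [Semiring α] [PartialOrder α] [IsOrderedRing α] {M : Matrix ι ι α}
    (hM : ∀ a b, 0 ≤ M a b) {L : ℕ} (hL : 1 ≤ L) (a b : ι) :
    M a b ≤ (∑ m ∈ range (L + 1), M ^ m) a b := by
  rw [Matrix.sum_apply]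
  simpa using single_le_sum (f := fun m => (M ^ m) a b)
    (fun m _ => pow_apply_nonneg hM m a b) (mem_range.2 (by omega : 1 < L + 1))

lemma one_div_log_nat_add_two_nonneg (k : ℕ) : 0 ≤ 1 / Real.log ((k : ℝ) + 2) :=
  one_div_nonneg.2 (Real.log_nonneg (by linarith [(k.cast_nonneg : (0 : ℝ) ≤ k)]))

lemma Dconst_nonneg (K : ℕ) : 0 ≤ Dconst K :=
  sum_nonneg fun r _ => one_div_nonneg.2 (Real.log_nonneg (by linarith [r.cast_nonneg (α := ℝ)]))

lemma adj_nonneg {n K : ℕ} (P : Fin n → Fin K → Fin n) (i j : Fin n) : 0 ≤ adj P i j :=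
  sum_nonneg fun k _ => by
    split_ifs
    exacts [one_div_log_nat_add_two_nonneg k, le_rfl]

lemma one_div_log_le_adj {n K : ℕ} (P : Fin n → Fin K → Fin n) (i : Fin n) (k : Fin K) :
    1 / Real.log (((k : ℕ) : ℝ) + 2) ≤ adj P i (P i k) := by
  simpa [adj] using single_le_sum
    (f := fun l : Fin K => if P i l = P i k then 1 / Real.log (((l : ℕ) : ℝ) + 2) else 0)
    (fun l _ => by split_ifs; exacts [one_div_log_nat_add_two_nonneg l, le_rfl]) (mem_univ k)

lemma normAdj_nonneg {n K : ℕ} (P : Fin n → Fin K → Fin n) (i j : Fin n) :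
    0 ≤ normAdj P i j :=
  mul_nonneg (inv_nonneg.2 (Dconst_nonneg K)) (adj_nonneg P i j)

lemma pprTrunc_apply {n K : ℕ} (P : Fin n → Fin K → Fin n) (c : ℝ) (L : ℕ) (i j : Fin n) :
    pprTrunc P c L i j = (1 - c) * (∑ m ∈ range (L + 1), (c • (normAdj P)ᵀ) ^ m) j i := by
  simp [pprTrunc]

theorem pprTrunc_lower_bound_general
    (n K : ℕ) (P : Fin n → Fin K → Fin n)
    (c : ℝ) (hc0 : 0 ≤ c) (hc1 : c ≤ 1) (L : ℕ) (hL : 1 ≤ L)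
    (i : Fin n) (k : Fin K) :
    (1 - c) * c / (Dconst K * Real.log (((k : ℕ) : ℝ) + 2)) ≤ pprTrunc P c L i (P i k) := by
  have h1c : 0 ≤ 1 - c := by linarith
  have hD : 0 ≤ (Dconst K)⁻¹ := inv_nonneg.2 (Dconst_nonneg K)
  have hM : ∀ a b, 0 ≤ (c • (normAdj P)ᵀ) a b := fun a b => mul_nonneg hc0 (normAdj_nonneg P b a)
  calc (1 - c) * c / (Dconst K * Real.log (((k : ℕ) : ℝ) + 2))
      = (1 - c) * (c * ((Dconst K)⁻¹ * (1 / Real.log (((k : ℕ) : ℝ) + 2)))) := by ring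
    _ ≤ (1 - c) * (c * ((Dconst K)⁻¹ * adj P i (P i k))) := by
        gcongr
        exact one_div_log_le_adj P i k
    _ = (1 - c) * (c • (normAdj P)ᵀ) (P i k) i := by simp [normAdj]
    _ ≤ (1 - c) * (∑ m ∈ range (L + 1), (c • (normAdj P)ᵀ) ^ m) (P i k) i := by
        gcongr
        exact apply_le_sum_range_pow_apply hM hL _ _
    _ = pprTrunc P c L i (P i k) := (pprTrunc_apply P c L i _).symm

/-- Lower bound on the truncated personalized PageRank value of a recommended item:
`Ŝ_i (P i k) ≥ (1-c) · c / (D · log (k+2))`. -/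
theorem pprTrunc_lower_bound
    (n K : ℕ) (hK : 1 ≤ K) (P : Fin n → Fin K → Fin n)
    (hinj : ∀ i, Function.Injective (P i))
    (hne : ∀ i k, P i k ≠ i)
    (c : ℝ) (hc0 : 0 ≤ c) (hc1 : c ≤ 1) (L : ℕ) (hL : 1 ≤ L)
    (i : Fin n) (k : Fin K) :
    (1 - c) * c / (Dconst K * Real.log (((k : ℕ) : ℝ) + 2)) ≤ pprTrunc P c L i (P i k) :=
  pprTrunc_lower_bound_general n K P c hc0 hc1 L hL i k
end
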